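/- In the explicit solution of the functional equation F(s) = x·e(s) + x·f_{-1}(s)·F(1) + x·f_1(s)·F(qs), the coefficient of x^{n+1} in F(s) equals Σ_{J∈{-1,1}^n} e(q^{a_{n+1}} s^{b_{n+1}})·∏_{k=1}^n f_{j_k}(q^{a_k} s^{b_k}) evaluated with the x-grading accounted for, provided e, f_{-1}, f_1 do not involve x. In particular, each coefficient of F is a finite sum of 2^n explicitly computable terms. -/

import Mathlib

/-!
Comparing coefficients of `x^{n+1}` turns the functional equation into the recursion
`F_{n+1}(s) = [n = 0] e(s) + f_{-1}(s) F_n(1) + f_1(s) F_n(qs)` with `F_0 = 0`. Unrolling it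
prepends a letter `j` to the word `J`: the new factor `f_j(s)` enters unsubstituted
(`a_1 = 0`, `b_1 = 1`), while every older factor, evaluated at `q^a s^b`, is further evaluated at
`s = 1` (`j = -1`) or `s = qs` (`j = 1`), landing at `q^a s^0` resp. `q^{a+b} s^b`. This is exactly
how the run statistics `(a_k, b_k)` of a word change when a letter is prepended.
-/

noncomputable section

variable (R : Type*) [CommRing R]

/-- The coefficient ring `R[[q]][s]` (independent of `x`). -/
abbrev QS := Polynomial (PowerSeries R)

/-- Substitution `s ↦ q^a s^b` on the coefficient ring (with `s^0 = 1`). -/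
def subAB (a b : ℕ) : QS R →+* QS R :=
  (Polynomial.aeval ((Polynomial.C (PowerSeries.X ^ a) : QS R) * Polynomial.X ^ b)).toRingHom

/-- `a_k`: the length of the maximal run of 1s (`true`s) among the first `k`
entries of `J` ending at entry `k-1`. -/
def runA (J : ℕ → Bool) (k : ℕ) : ℕ :=
  ((Finset.range k).filter fun i => ∀ j ∈ Finset.Ico i k, J j = true).card

/-- `b_k`: equals `1` if the first `k` entries of `J` are all 1, else `0`. -/
def runB (J : ℕ → Bool) (k : ℕ) : ℕ :=
  if ∀ i < k, J i = true then 1 else 0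

/-- Extend a word of length `n` to `ℕ → Bool` by `false`. -/
def extWord (n : ℕ) (J : Fin n → Bool) : ℕ → Bool :=
  fun i => if h : i < n then J ⟨i, h⟩ else false

theorem subAB_zero_one (p : QS R) : subAB R 0 1 p = p := by
  simp [subAB]

theorem subAB_subAB (a b c d : ℕ) (p : QS R) :
    subAB R c d (subAB R a b p) = subAB R (a + c * b) (d * b) p := by
  change Polynomial.aeval _ (Polynomial.aeval _ p) = Polynomial.aeval _ p
  rw [← Polynomial.aeval_algHom_apply]
  congr 2
  simp only [map_mul, map_pow, Polynomial.aeval_X, Polynomial.aeval_C, Polynomial.algebraMap_eq]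
  ring

def consWord (b : Bool) (J : ℕ → Bool) : ℕ → Bool
  | 0 => b
  | i + 1 => J i

theorem runA_zero (J : ℕ → Bool) : runA J 0 = 0 := by simp [runA]

theorem runB_zero (J : ℕ → Bool) : runB J 0 = 1 := by simp [runB]

theorem forall_lt_succ_consWord (b : Bool) (J : ℕ → Bool) (k : ℕ) :
    (∀ i < k + 1, consWord b J i = true) ↔ b = true ∧ ∀ i < k, J i = true :=
  ⟨fun h => ⟨h 0 k.succ_pos, fun i hi => h (i + 1) (by omega)⟩,
    fun ⟨hb, h⟩ i hi => by
      cases i with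
      | zero => exact hb
      | succ i => exact h i (by omega)⟩

theorem runB_consWord_succ (b : Bool) (J : ℕ → Bool) (k : ℕ) :
    runB (consWord b J) (k + 1) = b.toNat * runB J k := by
  simp only [runB, forall_lt_succ_consWord]
  cases b <;> simp

theorem runA_consWord_succ (b : Bool) (J : ℕ → Bool) (k : ℕ) :
    runA (consWord b J) (k + 1) = runA J k + b.toNat * runB J k := by
  rw [← runB_consWord_succ]
  unfold runA runB
  rw [Finset.card_filter, Finset.card_filter, Finset.sum_range_succ']
  congr 1
  · refine Finset.sum_congr rfl fun i _ => if_congr ?_ rfl rfl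
    refine ⟨fun h j hj => h (j + 1) (by simp_all), fun h j hj => ?_⟩
    obtain ⟨j, rfl⟩ : ∃ j', j = j' + 1 := Nat.exists_eq_add_one.mpr (by simp_all; omega)
    exact h j (by simp_all)
  · simp only [Finset.mem_Ico, zero_le, true_and]

theorem extWord_succ_cons (n : ℕ) (b : Bool) (J : Fin n → Bool) :
    extWord (n + 1) (Fin.cons b J) = consWord b (extWord n J) := by
  funext i
  cases i with
  | zero => rfl
  | succ i =>
    by_cases hi : i < n
    · simp [extWord, consWord, hi, ← Fin.succ_mk]
    · simp [extWord, consWord, hi]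

theorem subAB_subAB_runA_runB (b : Bool) (J : ℕ → Bool) (k : ℕ) (p : QS R) :
    subAB R b.toNat b.toNat (subAB R (runA J k) (runB J k) p)
      = subAB R (runA (consWord b J) (k + 1)) (runB (consWord b J) (k + 1)) p := by
  rw [subAB_subAB, runA_consWord_succ, runB_consWord_succ]

def solutionTerm (e fneg fpos : QS R) (n : ℕ) (J : Fin n → Bool) : QS R :=
  subAB R (runA (extWord n J) n) (runB (extWord n J) n) e *
    ∏ k : Fin n,
      subAB R (runA (extWord n J) k) (runB (extWord n J) k) (if J k then fpos else fneg)

theorem solutionTerm_zero (e fneg fpos : QS R) (J : Fin 0 → Bool) :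
    solutionTerm R e fneg fpos 0 J = e := by
  simp [solutionTerm, runA_zero, runB_zero, subAB_zero_one]

theorem solutionTerm_cons (e fneg fpos : QS R) (n : ℕ) (b : Bool) (J : Fin n → Bool) :
    solutionTerm R e fneg fpos (n + 1) (Fin.cons b J)
      = (if b then fpos else fneg) * subAB R b.toNat b.toNat (solutionTerm R e fneg fpos n J) := by
  simp only [solutionTerm, extWord_succ_cons, Fin.prod_univ_succ, Fin.cons_zero, Fin.cons_succ,
    Fin.val_zero, Fin.val_succ, map_mul, map_prod, subAB_subAB_runA_runB]
  rw [show runA (consWord b (extWord n J)) 0 = 0 from runA_zero _,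
    show runB (consWord b (extWord n J)) 0 = 1 from runB_zero _, subAB_zero_one]
  ring

section Solution

variable {R} {e fneg fpos : QS R} {F : PowerSeries (QS R)}
  (hF : F = PowerSeries.X * PowerSeries.C e
    + PowerSeries.X * PowerSeries.C fneg * PowerSeries.map (subAB R 0 0) F
    + PowerSeries.X * PowerSeries.C fpos * PowerSeries.map (subAB R 1 1) F)
include hF

theorem coeff_zero_of_solution : PowerSeries.coeff 0 F = 0 := by
  rw [hF]
  simp [PowerSeries.coeff_zero_eq_constantCoeff]

theorem coeff_succ_of_solution (n : ℕ) :
    PowerSeries.coeff (n + 1) F = (if n = 0 then e else 0)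
      + ∑ b : Bool,
          (if b then fpos else fneg) * subAB R b.toNat b.toNat (PowerSeries.coeff n F) := by
  conv_lhs => rw [hF]
  simp only [map_add, mul_assoc, PowerSeries.coeff_succ_X_mul, PowerSeries.coeff_C,
    PowerSeries.coeff_C_mul, PowerSeries.coeff_map, Fintype.sum_bool]
  simp [add_assoc, add_comm]

end Solution

/-- If `e, f_{-1}, f_1` do not involve `x` and `F` is a solution of
`F(s) = x·e(s) + x·f_{-1}(s)·F(1) + x·f_1(s)·F(qs)`, then the coefficient of
`x^{n+1}` in `F` is the finite sum of `2^n` explicit terms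
`Σ_{J∈{-1,1}^n} e(q^{a_{n+1}} s^{b_{n+1}}) ∏_{k=1}^n f_{j_k}(q^{a_k} s^{b_k})`. -/
theorem coeff_of_solution (e fneg fpos : QS R) (F : PowerSeries (QS R))
    (hF : F = PowerSeries.X * PowerSeries.C e
        + PowerSeries.X * PowerSeries.C fneg
            * PowerSeries.map (subAB R 0 0) F
        + PowerSeries.X * PowerSeries.C fpos
            * PowerSeries.map (subAB R 1 1) F) (n : ℕ) :
    PowerSeries.coeff (n + 1) F
      = ∑ J : Fin n → Bool,
          subAB R (runA (extWord n J) n) (runB (extWord n J) n) e *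
            ∏ k : Fin n,
              subAB R (runA (extWord n J) k) (runB (extWord n J) k)
                (if J k then fpos else fneg) := by
  change _ = ∑ J, solutionTerm R e fneg fpos n J
  induction n with
  | zero =>
    simp [coeff_succ_of_solution hF, coeff_zero_of_solution hF, solutionTerm_zero]
  | succ n ih =>
    rw [coeff_succ_of_solution hF, if_neg n.succ_ne_zero, zero_add, ih,
      ← (Fin.consEquiv fun _ => Bool).sum_comp, Fintype.sum_prod_type]
    simp only [map_sum, Finset.mul_sum]
    exact Fintype.sum_congr _ _ fun b =>
      Fintype.sum_congr _ _ fun J => (solutionTerm_cons R ..).symm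

end
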